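/- arXiv:2306.12271 — 4 statements merged into one kernel-verified Lean document; each statement's English description precedes it below -/
import Mathlib

section
/- For m ≥ 2 and an integrable quantile function Q on [0,1] with mean μ = ∫_0^1 Q(t) dt, the function defined by Λ̃^m(p) = ∫_p^1 ⋯ ∫_{t_3}^1 (∫_0^{t_2} Q(t_1) dt_1) dt_2 ⋯ dt_{m−1} equals (1/(m−2)!) [ (1−p)^{m−2} μ − ∫_p^1 (t−p)^{m−2} Q(t) dt ] for every p ∈ [0,1]. -/
open MeasureTheory

/-- Downward iterated integral: `iterLamD Q 0 = Λ̃²`, `iterLamD Q k = Λ̃^{k+2}`. -/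
noncomputable def iterLamD (Q : ℝ → ℝ) : ℕ → ℝ → ℝ
  | 0, p => ∫ t in (0:ℝ)..p, Q t
  | (k+1), p => ∫ t in p..1, iterLamD Q k t

section Aux

variable {Q : ℝ → ℝ}

lemma hxQ (hQ : IntervalIntegrable Q volume 0 1) (j : ℕ) :
    IntervalIntegrable (fun s => s ^ j * Q s) volume 0 1 :=
  hQ.continuousOn_mul (Continuous.continuousOn (by continuity))

lemma binom_rw (hQ : IntervalIntegrable Q volume 0 1) (k : ℕ) {t : ℝ}
    (ht : t ∈ Set.Icc (0:ℝ) 1) :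
    (∫ s in t..1, (s - t) ^ k * Q s)
      = ∑ j ∈ Finset.range (k + 1),
          ((k.choose j : ℝ) * (-t) ^ (k - j)) * ∫ s in t..1, s ^ j * Q s := by
  have h1 : (∫ s in t..1, (s - t) ^ k * Q s)
      = ∫ s in t..1, ∑ j ∈ Finset.range (k + 1),
          ((k.choose j : ℝ) * (-t) ^ (k - j)) * (s ^ j * Q s) := by
    apply intervalIntegral.integral_congr
    intro s _
    show (s - t) ^ k * Q s = _
    rw [sub_eq_add_neg, add_pow, Finset.sum_mul]
    apply Finset.sum_congr rfl
    intro j _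
    ring
  rw [h1, intervalIntegral.integral_finset_sum]
  · exact Finset.sum_congr rfl fun j _ => intervalIntegral.integral_const_mul _ _
  · intro j _
    exact ((hxQ hQ j).mono_set
      (Set.uIcc_subset_uIcc (by rw [Set.uIcc_of_le zero_le_one]; exact ht) Set.right_mem_uIcc)).const_mul _

lemma contg (hQ : IntervalIntegrable Q volume 0 1) (k : ℕ) :
    ContinuousOn (fun t => ∫ s in t..1, (s - t) ^ k * Q s) (Set.Icc 0 1) := by
  apply ContinuousOn.congr (f := fun t => ∑ j ∈ Finset.range (k + 1),
      ((k.choose j : ℝ) * (-t) ^ (k - j)) * ∫ s in t..1, s ^ j * Q s)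
  · apply continuousOn_finset_sum
    intro j _
    apply ContinuousOn.mul (Continuous.continuousOn (by continuity))
    have h : Set.Icc (0:ℝ) 1 = Set.uIcc (0:ℝ) 1 := (Set.uIcc_of_le zero_le_one).symm
    rw [h]
    apply intervalIntegral.continuousOn_primitive_interval_left
    rw [Set.uIcc_of_le zero_le_one, ← Set.uIcc_of_le zero_le_one]
    exact (intervalIntegrable_iff_integrableOn_Icc_of_le zero_le_one).mp (hxQ hQ j)
      |>.mono_set (by rw [Set.uIcc_of_le zero_le_one])
  · intro t ht
    exact binom_rw hQ k ht

/-- Fubini on the triangle `p ≤ t ≤ s ≤ 1`. -/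
lemma swap_key (hQ : IntervalIntegrable Q volume 0 1) (k : ℕ) {p : ℝ}
    (hp0 : 0 ≤ p) (hp1 : p ≤ 1) :
    (∫ t in p..1, ∫ s in t..1, (s - t) ^ k * Q s)
      = ∫ s in p..1, (s - p) ^ (k + 1) / (k + 1) * Q s := by
  set μr := volume.restrict (Set.Ioc p 1) with hμr
  have hQint : IntegrableOn Q (Set.Ioc p 1) volume :=
    ((intervalIntegrable_iff_integrableOn_Ioc_of_le zero_le_one).mp hQ).mono_set
      (Set.Ioc_subset_Ioc hp0 le_rfl)
  haveI : IsFiniteMeasure μr :=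
    ⟨by rw [hμr, Measure.restrict_apply_univ]; exact measure_Ioc_lt_top⟩
  set F : ℝ × ℝ → ℝ :=
    Set.indicator {z : ℝ × ℝ | z.1 < z.2} (fun z => (z.2 - z.1) ^ k * Q z.2) with hF
  have hmeas : AEStronglyMeasurable F (μr.prod μr) := by
    apply AEStronglyMeasurable.indicator
    · exact (((continuous_snd.sub continuous_fst).pow k).aestronglyMeasurable).mul
        (hQint.aestronglyMeasurable.comp_snd)
    · exact measurableSet_lt measurable_fst measurable_snd
  have hQ2 : Integrable (fun z : ℝ × ℝ => Q z.2) (μr.prod μr) := by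
    rw [integrable_prod_iff (hQint.aestronglyMeasurable.comp_snd)]
    refine ⟨Filter.Eventually.of_forall fun t => hQint, ?_⟩
    simpa using integrable_const (∫ s, ‖Q s‖ ∂μr)
  have hFint : Integrable F (μr.prod μr) := by
    apply Integrable.mono hQ2 hmeas
    have hprod : μr.prod μr
        = (volume.prod volume).restrict (Set.Ioc p 1 ×ˢ Set.Ioc p 1) := by
      rw [hμr, Measure.prod_restrict]
    rw [hprod, ae_restrict_iff' (measurableSet_Ioc.prod measurableSet_Ioc)]
    apply Filter.Eventually.of_forall
    rintro ⟨t, s⟩ ⟨ht, hs⟩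
    simp only [hF, Set.indicator_apply, Set.mem_setOf_eq]
    split_ifs with h
    · rw [norm_mul]
      have h1 : ‖(s - t) ^ k‖ ≤ 1 := by
        rw [norm_pow]
        apply pow_le_one₀ (norm_nonneg _)
        rw [Real.norm_eq_abs, abs_le]
        constructor <;> [linarith [ht.1, ht.2, hs.1, hs.2]; linarith [ht.1, hs.2, hp0]]
      calc ‖(s - t) ^ k‖ * ‖Q s‖ ≤ 1 * ‖Q s‖ :=
            mul_le_mul_of_nonneg_right h1 (norm_nonneg _)
        _ = ‖Q s‖ := one_mul _
    · simp [norm_nonneg]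
  have hL : ∀ t ∈ Set.Ioc p 1, (∫ s in t..1, (s - t) ^ k * Q s) = ∫ s, F (t, s) ∂μr := by
    intro t ht
    have hfun : (fun s => F (t, s))
        = Set.indicator (Set.Ioi t) (fun s => (s - t) ^ k * Q s) := by
      funext s
      simp [hF, Set.indicator_apply]
    rw [hfun, hμr, setIntegral_indicator measurableSet_Ioi, Set.Ioc_inter_Ioi,
      sup_of_le_right ht.1.le, intervalIntegral.integral_of_le ht.2]
  have hR : ∀ s ∈ Set.Ioc p 1, (∫ t, F (t, s) ∂μr) = (s - p) ^ (k + 1) / (k + 1) * Q s := by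
    intro s hs
    have hfun : (fun t => F (t, s))
        = Set.indicator (Set.Iio s) (fun t => (s - t) ^ k * Q s) := by
      funext t
      simp [hF, Set.indicator_apply]
    have hset : Set.Ioc p 1 ∩ Set.Iio s = Set.Ioo p s := by
      ext t
      simp only [Set.mem_inter_iff, Set.mem_Ioc, Set.mem_Iio, Set.mem_Ioo]
      exact ⟨fun h => ⟨h.1.1, h.2⟩, fun h => ⟨⟨h.1, le_trans h.2.le hs.2⟩, h.2⟩⟩
    rw [hfun, hμr, setIntegral_indicator measurableSet_Iio, hset]
    rw [show (∫ t in Set.Ioo p s, (s - t) ^ k * Q s)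
        = (∫ t in Set.Ioo p s, (s - t) ^ k) * Q s from integral_mul_const _ _]
    congr 1
    rw [← MeasureTheory.integral_Ioc_eq_integral_Ioo,
      ← intervalIntegral.integral_of_le hs.1.le,
      intervalIntegral.integral_comp_sub_left (fun u => u ^ k) s, sub_self,
      integral_pow]
    simp
  calc (∫ t in p..1, ∫ s in t..1, (s - t) ^ k * Q s)
      = ∫ t in Set.Ioc p 1, (∫ s in t..1, (s - t) ^ k * Q s) := by
        rw [intervalIntegral.integral_of_le hp1]
    _ = ∫ t, (∫ s, F (t, s) ∂μr) ∂μr := by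
        rw [hμr]; exact setIntegral_congr_fun measurableSet_Ioc hL
    _ = ∫ s, (∫ t, F (t, s) ∂μr) ∂μr := integral_integral_swap hFint
    _ = ∫ s in Set.Ioc p 1, (s - p) ^ (k + 1) / (k + 1) * Q s := by
        rw [hμr]; exact setIntegral_congr_fun measurableSet_Ioc hR
    _ = ∫ s in p..1, (s - p) ^ (k + 1) / (k + 1) * Q s :=
        (intervalIntegral.integral_of_le hp1).symm

lemma aux_main (hQ : IntervalIntegrable Q volume 0 1) :
    ∀ k : ℕ, ∀ p ∈ Set.Icc (0:ℝ) 1,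
      iterLamD Q k p
        = (1 / (Nat.factorial k : ℝ)) *
            ((1 - p) ^ k * (∫ t in (0:ℝ)..1, Q t) - ∫ t in p..1, (t - p) ^ k * Q t) := by
  intro k
  induction k with
  | zero =>
    intro p hp
    have h0p : IntervalIntegrable Q volume 0 p :=
      hQ.mono_set (Set.uIcc_subset_uIcc Set.left_mem_uIcc
        (by rw [Set.uIcc_of_le zero_le_one]; exact hp))
    have hp1 : IntervalIntegrable Q volume p 1 :=
      hQ.mono_set (Set.uIcc_subset_uIcc
        (by rw [Set.uIcc_of_le zero_le_one]; exact hp) Set.right_mem_uIcc)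
    have hadd := intervalIntegral.integral_add_adjacent_intervals h0p hp1
    simp only [iterLamD, Nat.factorial_zero, Nat.cast_one, pow_zero, one_mul, one_div,
      inv_one]
    linarith
  | succ k ih =>
    intro p hp
    have hpIcc : Set.uIcc p 1 ⊆ Set.Icc (0:ℝ) 1 := by
      rw [Set.uIcc_of_le hp.2]
      exact Set.Icc_subset_Icc hp.1 le_rfl
    have h1 : Set.EqOn (iterLamD Q k)
        (fun t => (1 / (Nat.factorial k : ℝ)) *
          ((1 - t) ^ k * (∫ t in (0:ℝ)..1, Q t) - ∫ s in t..1, (s - t) ^ k * Q s))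
        (Set.uIcc p 1) := fun t ht => ih t (hpIcc ht)
    have hgint : IntervalIntegrable (fun t => ∫ s in t..1, (s - t) ^ k * Q s) volume p 1 :=
      ((contg hQ k).mono hpIcc).intervalIntegrable
    have hAint : IntervalIntegrable
        (fun t => (1 - t) ^ k * (∫ t in (0:ℝ)..1, Q t)) volume p 1 :=
      (Continuous.intervalIntegrable (by continuity) p 1)
    have hcalc : iterLamD Q (k + 1) p = (1 / (Nat.factorial k : ℝ)) *
        ((∫ t in p..1, (1 - t) ^ k * (∫ t in (0:ℝ)..1, Q t))
          - ∫ t in p..1, ∫ s in t..1, (s - t) ^ k * Q s) := by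
      show (∫ t in p..1, iterLamD Q k t) = _
      rw [intervalIntegral.integral_congr h1, intervalIntegral.integral_const_mul,
        intervalIntegral.integral_sub hAint hgint]
    rw [hcalc, swap_key hQ k hp.1 hp.2]
    have hA : (∫ t in p..1, (1 - t) ^ k * (∫ t in (0:ℝ)..1, Q t))
        = (1 - p) ^ (k + 1) / (k + 1) * (∫ t in (0:ℝ)..1, Q t) := by
      rw [intervalIntegral.integral_mul_const]
      congr 1
      rw [intervalIntegral.integral_comp_sub_left (fun u => u ^ k) 1, sub_self,
        integral_pow]
      simp
    have hB : (∫ s in p..1, (s - p) ^ (k + 1) / (k + 1) * Q s)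
        = (1 / ((k : ℝ) + 1)) * ∫ s in p..1, (s - p) ^ (k + 1) * Q s := by
      rw [← intervalIntegral.integral_const_mul]
      apply intervalIntegral.integral_congr
      intro s _
      ring
    rw [hA, hB]
    have hfact : (Nat.factorial (k + 1) : ℝ) = ((k : ℝ) + 1) * (Nat.factorial k : ℝ) := by
      rw [Nat.factorial_succ]; push_cast; ring
    have hk0 : (Nat.factorial k : ℝ) ≠ 0 := Nat.cast_ne_zero.mpr (Nat.factorial_ne_zero k)
    have hk1 : ((k : ℝ) + 1) ≠ 0 := by positivity
    rw [hfact]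
    field_simp

end Aux

/-- Closed-form formula for the downward iterated integral. -/
theorem stmt1 (Q : ℝ → ℝ) (hQ : IntervalIntegrable Q volume 0 1)
    (m : ℕ) (hm : 2 ≤ m) (p : ℝ) (hp : p ∈ Set.Icc (0:ℝ) 1) :
    iterLamD Q (m - 2) p
      = (1 / (Nat.factorial (m - 2) : ℝ)) *
          ((1 - p) ^ (m - 2) * (∫ t in (0:ℝ)..1, Q t)
            - ∫ t in p..1, (t - p) ^ (m - 2) * Q t) := by
  exact aux_main hQ (m - 2) p hp
end

section
/- For a random pair (U, V) with uniform [0,1] marginals and joint CDF C (a copula), and absolutely continuous functions G, H on [0,1] of bounded variation with integrable derivatives g, h, we have Cov(G(U), H(V)) = ∫_0^1 ∫_0^1 g(s) h(t) (C(s,t) − st) ds dt. -/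
open MeasureTheory

lemma aux_indicator_int (g : ℝ → ℝ) (hg : IntegrableOn g (Set.Icc 0 1)) {a : ℝ}
    (ha : a ∈ Set.Icc (0:ℝ) 1) :
    (∫ s in Set.Ioc (0:ℝ) 1, (if a ≤ s then g s else 0))
      = (∫ s in (0:ℝ)..1, g s) - ∫ s in (0:ℝ)..a, g s := by
  have hI1 : IntervalIntegrable g volume 0 1 := by
    have : IntegrableOn g (Set.uIcc 0 1) := by rwa [Set.uIcc_of_le zero_le_one]
    exact this.intervalIntegrable
  have hIa : IntervalIntegrable g volume 0 a := by
    have : IntegrableOn g (Set.uIcc 0 a) := by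
      refine hg.mono_set ?_
      rw [Set.uIcc_of_le ha.1]
      exact Set.Icc_subset_Icc le_rfl ha.2
    exact this.intervalIntegrable
  have h1 : (fun s => if a ≤ s then g s else 0) = Set.indicator (Set.Ici a) g := by
    funext s; simp [Set.indicator_apply, Set.mem_Ici]
  rw [h1, MeasureTheory.integral_indicator measurableSet_Ici,
    Measure.restrict_restrict measurableSet_Ici]
  have hseteq : (Set.Ici a ∩ Set.Ioc 0 1 : Set ℝ) =ᵐ[volume] (Set.Ioc a 1 : Set ℝ) := by
    rw [MeasureTheory.ae_eq_set]
    constructor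
    · refine measure_mono_null (t := {a}) ?_ (Real.volume_singleton)
      rintro x ⟨⟨hx1, _, hx3⟩, hx4⟩
      have : ¬ (a < x ∧ x ≤ 1) := fun h => hx4 ⟨h.1, h.2⟩
      push_neg at this
      have hxa : x ≤ a := by
        by_contra hc
        push_neg at hc
        exact absurd (this hc) (not_lt.mpr hx3)
      exact Set.mem_singleton_iff.mpr (le_antisymm hxa hx1)
    · refine measure_mono_null (t := (∅ : Set ℝ)) ?_ measure_empty
      rintro x ⟨⟨hx1, hx2⟩, hx3⟩
      exact hx3 ⟨le_of_lt hx1, lt_of_le_of_lt ha.1 hx1, hx2⟩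
  rw [setIntegral_congr_set hseteq, ← intervalIntegral.integral_of_le ha.2]
  exact (intervalIntegral.integral_interval_sub_left hI1 hIa).symm

/-- Cuadras–Hoeffding covariance representation:
`Cov(G(U), H(V)) = ∫₀¹∫₀¹ g(s) h(t) (C(s,t) − st) ds dt`. -/
theorem stmt5 {Ω : Type*} [MeasureSpace Ω] [IsProbabilityMeasure (volume : Measure Ω)]
    (U V : Ω → ℝ) (hU : Measurable U) (hV : Measurable V)
    (hU01 : ∀ ω, U ω ∈ Set.Icc (0:ℝ) 1) (hV01 : ∀ ω, V ω ∈ Set.Icc (0:ℝ) 1)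
    (hUuni : ∀ u ∈ Set.Icc (0:ℝ) 1, (volume {ω | U ω ≤ u}).toReal = u)
    (hVuni : ∀ v ∈ Set.Icc (0:ℝ) 1, (volume {ω | V ω ≤ v}).toReal = v)
    (C : ℝ → ℝ → ℝ)
    (hC : ∀ s ∈ Set.Icc (0:ℝ) 1, ∀ t ∈ Set.Icc (0:ℝ) 1,
      C s t = (volume {ω | U ω ≤ s ∧ V ω ≤ t}).toReal)
    (G H g h : ℝ → ℝ)
    (hg : IntegrableOn g (Set.Icc 0 1)) (hh : IntegrableOn h (Set.Icc 0 1))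
    (hG : ∀ u ∈ Set.Icc (0:ℝ) 1, G u = G 0 + ∫ s in (0:ℝ)..u, g s)
    (hH : ∀ v ∈ Set.Icc (0:ℝ) 1, H v = H 0 + ∫ t in (0:ℝ)..v, h t) :
    (∫ ω, G (U ω) * H (V ω)) - (∫ ω, G (U ω)) * (∫ ω, H (V ω))
      = ∫ s in (0:ℝ)..1, ∫ t in (0:ℝ)..1, g s * h t * (C s t - s * t) := by
  classical
  set μ : Measure Ω := volume with hμdef
  have hνle : volume.restrict (Set.Ioc (0:ℝ) 1) ≤ volume.restrict (Set.Icc (0:ℝ) 1) :=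
    Measure.restrict_mono Set.Ioc_subset_Icc_self le_rfl
  -- measurable representatives of g and h on (0,1]
  obtain ⟨g', hg'sm, hgg'⟩ := (hg.aestronglyMeasurable.mono_measure hνle :
    AEStronglyMeasurable g (volume.restrict (Set.Ioc 0 1)))
  obtain ⟨h', hh'sm, hhh'⟩ := (hh.aestronglyMeasurable.mono_measure hνle :
    AEStronglyMeasurable h (volume.restrict (Set.Ioc 0 1)))
  have hg'meas : Measurable g' := hg'sm.measurable
  have hh'meas : Measurable h' := hh'sm.measurable
  have hg'int : Integrable g' (volume.restrict (Set.Ioc 0 1)) :=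
    ((hg.mono_set Set.Ioc_subset_Icc_self) : Integrable g _).congr hgg'
  have hh'int : Integrable h' (volume.restrict (Set.Ioc 0 1)) :=
    ((hh.mono_set Set.Ioc_subset_Icc_self) : Integrable h _).congr hhh'
  -- indicator-type kernels
  have msU : MeasurableSet {p : Ω × ℝ | U p.1 ≤ p.2} :=
    measurableSet_le (hU.comp measurable_fst) measurable_snd
  have msV : MeasurableSet {p : Ω × ℝ | V p.1 ≤ p.2} :=
    measurableSet_le (hV.comp measurable_fst) measurable_snd
  set f1 : Ω × ℝ → ℝ := fun p => if U p.1 ≤ p.2 then g' p.2 else 0 with hf1def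
  set f2 : Ω × ℝ → ℝ := fun p => if V p.1 ≤ p.2 then h' p.2 else 0 with hf2def
  set F2 : Ω × (ℝ × ℝ) → ℝ := fun p => (if U p.1 ≤ p.2.1 then g' p.2.1 else 0) *
      (if V p.1 ≤ p.2.2 then h' p.2.2 else 0) with hF2def
  have mf1 : Measurable f1 := Measurable.ite msU (hg'meas.comp measurable_snd) measurable_const
  have mf2 : Measurable f2 := Measurable.ite msV (hh'meas.comp measurable_snd) measurable_const
  have mF2 : Measurable F2 := by
    have e1 : F2 = fun p : Ω × (ℝ × ℝ) => f1 (p.1, p.2.1) * f2 (p.1, p.2.2) := rfl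
    rw [e1]
    exact (mf1.comp (measurable_fst.prodMk (measurable_fst.comp measurable_snd))).mul
      (mf2.comp (measurable_fst.prodMk (measurable_snd.comp measurable_snd)))
  -- integrability on product spaces
  have hbase1 : Integrable (fun p : Ω × ℝ => g' p.2) (μ.prod (volume.restrict (Set.Ioc 0 1))) := by
    have := (integrable_const (1:ℝ) : Integrable _ μ).mul_prod hg'int
    simpa using this
  have hbase1h : Integrable (fun p : Ω × ℝ => h' p.2) (μ.prod (volume.restrict (Set.Ioc 0 1))) := by
    have := (integrable_const (1:ℝ) : Integrable _ μ).mul_prod hh'int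
    simpa using this
  have int_f1 : Integrable f1 (μ.prod (volume.restrict (Set.Ioc 0 1))) := by
    refine Integrable.mono' hbase1.norm mf1.aestronglyMeasurable
      (Filter.Eventually.of_forall ?_)
    intro p
    rw [hf1def]
    dsimp only
    split
    · exact le_rfl
    · simp
  have int_f2 : Integrable f2 (μ.prod (volume.restrict (Set.Ioc 0 1))) := by
    refine Integrable.mono' hbase1h.norm mf2.aestronglyMeasurable
      (Filter.Eventually.of_forall ?_)
    intro p
    rw [hf2def]
    dsimp only
    split
    · exact le_rfl
    · simp
  have hbase2 : Integrable (fun p : Ω × (ℝ × ℝ) => g' p.2.1 * h' p.2.2)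
      (μ.prod ((volume.restrict (Set.Ioc 0 1)).prod (volume.restrict (Set.Ioc 0 1)))) := by
    have hz : Integrable (fun z : ℝ × ℝ => g' z.1 * h' z.2)
        ((volume.restrict (Set.Ioc 0 1)).prod (volume.restrict (Set.Ioc 0 1))) :=
      hg'int.mul_prod hh'int
    have := (integrable_const (1:ℝ) : Integrable _ μ).mul_prod hz
    simpa using this
  have intF2 : Integrable F2
      (μ.prod ((volume.restrict (Set.Ioc 0 1)).prod (volume.restrict (Set.Ioc 0 1)))) := by
    refine Integrable.mono' hbase2.norm mF2.aestronglyMeasurable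
      (Filter.Eventually.of_forall ?_)
    intro p
    rw [hF2def]
    dsimp only
    rw [norm_mul, norm_mul]
    have h1 : ‖(if U p.1 ≤ p.2.1 then g' p.2.1 else 0)‖ ≤ ‖g' p.2.1‖ := by
      split
      · exact le_rfl
      · simp
    have h2 : ‖(if V p.1 ≤ p.2.2 then h' p.2.2 else 0)‖ ≤ ‖h' p.2.2‖ := by
      split
      · exact le_rfl
      · simp
    exact mul_le_mul h1 h2 (norm_nonneg _) (norm_nonneg _)
  -- marginal functions
  set Φ : Ω → ℝ := fun ω => ∫ s, f1 (ω, s) ∂(volume.restrict (Set.Ioc 0 1)) with hΦdef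
  set Ψ : Ω → ℝ := fun ω => ∫ t, f2 (ω, t) ∂(volume.restrict (Set.Ioc 0 1)) with hΨdef
  have hΦint : Integrable Φ μ := int_f1.integral_prod_left
  have hΨint : Integrable Ψ μ := int_f2.integral_prod_left
  have hΦΨ : ∀ ω, Φ ω * Ψ ω
      = ∫ z, F2 (ω, z) ∂((volume.restrict (Set.Ioc 0 1)).prod (volume.restrict (Set.Ioc 0 1))) := by
    intro ω
    rw [hΦdef, hΨdef]
    exact (integral_prod_mul (μ := volume.restrict (Set.Ioc 0 1))
      (ν := volume.restrict (Set.Ioc 0 1))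
      (fun s => if U ω ≤ s then g' s else 0) (fun t => if V ω ≤ t then h' t else 0)).symm
  have hΦΨint : Integrable (fun ω => Φ ω * Ψ ω) μ :=
    (intF2.integral_prod_left).congr (Filter.Eventually.of_forall fun ω => (hΦΨ ω).symm)
  -- pointwise identities for G and H
  have keyG : ∀ ω, G (U ω) = G 1 - Φ ω := by
    intro ω
    have h1 := hG 1 (by norm_num)
    have h2 := hG (U ω) (hU01 ω)
    have h3 : Φ ω = (∫ s in (0:ℝ)..1, g s) - ∫ s in (0:ℝ)..(U ω), g s := by
      have hcongr : Φ ω = ∫ s in Set.Ioc (0:ℝ) 1, (if U ω ≤ s then g s else 0) := by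
        rw [hΦdef]
        refine integral_congr_ae ?_
        filter_upwards [hgg'] with s hs
        rw [hf1def]
        dsimp only
        rw [hs]
      rw [hcongr]
      exact aux_indicator_int g hg (hU01 ω)
    rw [h1, h2, h3]
    ring
  have keyH : ∀ ω, H (V ω) = H 1 - Ψ ω := by
    intro ω
    have h1 := hH 1 (by norm_num)
    have h2 := hH (V ω) (hV01 ω)
    have h3 : Ψ ω = (∫ t in (0:ℝ)..1, h t) - ∫ t in (0:ℝ)..(V ω), h t := by
      have hcongr : Ψ ω = ∫ t in Set.Ioc (0:ℝ) 1, (if V ω ≤ t then h t else 0) := by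
        rw [hΨdef]
        refine integral_congr_ae ?_
        filter_upwards [hhh'] with t ht
        rw [hf2def]
        dsimp only
        rw [ht]
      rw [hcongr]
      exact aux_indicator_int h hh (hV01 ω)
    rw [h1, h2, h3]
    ring
  -- value of the first moments
  have hA : ∫ ω, Φ ω ∂μ = ∫ s in Set.Ioc (0:ℝ) 1, s * g' s := by
    have hswap : ∫ ω, Φ ω ∂μ = ∫ s, (∫ ω, f1 (ω, s) ∂μ) ∂(volume.restrict (Set.Ioc 0 1)) := by
      rw [hΦdef]
      exact integral_integral_swap int_f1
    rw [hswap]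
    refine integral_congr_ae ?_
    filter_upwards [ae_restrict_mem measurableSet_Ioc] with s hs
    have e : (fun ω => f1 (ω, s)) = Set.indicator {ω | U ω ≤ s} (fun _ => g' s) := by
      funext ω
      rw [hf1def]
      by_cases hω : U ω ≤ s
      · simp [Set.indicator, hω]
      · simp [Set.indicator, hω]
    rw [e]
    calc integral μ (Set.indicator {ω | U ω ≤ s} (fun _ => g' s))
        = (μ {ω | U ω ≤ s}).toReal • g' s :=
          integral_indicator_const (g' s)
            (show MeasurableSet {ω | U ω ≤ s} from hU measurableSet_Iic)
      _ = s * g' s := by rw [smul_eq_mul, hUuni s (Set.Ioc_subset_Icc_self hs)]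
  have hB : ∫ ω, Ψ ω ∂μ = ∫ t in Set.Ioc (0:ℝ) 1, t * h' t := by
    have hswap : ∫ ω, Ψ ω ∂μ = ∫ t, (∫ ω, f2 (ω, t) ∂μ) ∂(volume.restrict (Set.Ioc 0 1)) := by
      rw [hΨdef]
      exact integral_integral_swap int_f2
    rw [hswap]
    refine integral_congr_ae ?_
    filter_upwards [ae_restrict_mem measurableSet_Ioc] with t ht
    have e : (fun ω => f2 (ω, t)) = Set.indicator {ω | V ω ≤ t} (fun _ => h' t) := by
      funext ω
      rw [hf2def]
      by_cases hω : V ω ≤ t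
      · simp [Set.indicator, hω]
      · simp [Set.indicator, hω]
    rw [e]
    calc integral μ (Set.indicator {ω | V ω ≤ t} (fun _ => h' t))
        = (μ {ω | V ω ≤ t}).toReal • h' t :=
          integral_indicator_const (h' t)
            (show MeasurableSet {ω | V ω ≤ t} from hV measurableSet_Iic)
      _ = t * h' t := by rw [smul_eq_mul, hVuni t (Set.Ioc_subset_Icc_self ht)]
  -- the product part
  have hprod_ae : ∀ᵐ z ∂((volume.restrict (Set.Ioc (0:ℝ) 1)).prod
      (volume.restrict (Set.Ioc (0:ℝ) 1))), z ∈ (Set.Ioc (0:ℝ) 1) ×ˢ (Set.Ioc (0:ℝ) 1) := by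
    rw [Measure.prod_restrict]
    exact ae_restrict_mem (measurableSet_Ioc.prod measurableSet_Ioc)
  have innerP : ∀ z ∈ (Set.Ioc (0:ℝ) 1) ×ˢ (Set.Ioc (0:ℝ) 1),
      (∫ ω, F2 (ω, z) ∂μ) = g' z.1 * h' z.2 * C z.1 z.2 := by
    rintro ⟨s, t⟩ ⟨hs, ht⟩
    have hms : MeasurableSet {ω | U ω ≤ s ∧ V ω ≤ t} := by
      have e : {ω | U ω ≤ s ∧ V ω ≤ t} = {ω | U ω ≤ s} ∩ {ω | V ω ≤ t} := rfl
      rw [e]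
      exact (hU measurableSet_Iic).inter (hV measurableSet_Iic)
    have e : (fun ω => F2 (ω, (s, t)))
        = Set.indicator {ω | U ω ≤ s ∧ V ω ≤ t} (fun _ => g' s * h' t) := by
      funext ω
      rw [hF2def]
      by_cases h1 : U ω ≤ s <;> by_cases h2 : V ω ≤ t <;> simp [Set.indicator, h1, h2]
    rw [e]
    calc integral μ (Set.indicator {ω | U ω ≤ s ∧ V ω ≤ t} (fun _ => g' s * h' t))
        = (μ {ω | U ω ≤ s ∧ V ω ≤ t}).toReal • (g' s * h' t) :=
          integral_indicator_const (g' s * h' t) hms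
      _ = g' s * h' t * C s t := by
          rw [smul_eq_mul, ← hC s (Set.Ioc_subset_Icc_self hs) t (Set.Ioc_subset_Icc_self ht)]
          ring
  have intC : Integrable (fun z : ℝ × ℝ => g' z.1 * h' z.2 * C z.1 z.2)
      ((volume.restrict (Set.Ioc (0:ℝ) 1)).prod (volume.restrict (Set.Ioc (0:ℝ) 1))) := by
    refine (intF2.integral_prod_right).congr ?_
    filter_upwards [hprod_ae] with z hz using innerP z hz
  have hP : ∫ ω, Φ ω * Ψ ω ∂μ = ∫ z, g' z.1 * h' z.2 * C z.1 z.2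
      ∂((volume.restrict (Set.Ioc (0:ℝ) 1)).prod (volume.restrict (Set.Ioc (0:ℝ) 1))) := by
    calc ∫ ω, Φ ω * Ψ ω ∂μ
        = ∫ ω, (∫ z, F2 (ω, z) ∂((volume.restrict (Set.Ioc (0:ℝ) 1)).prod
            (volume.restrict (Set.Ioc (0:ℝ) 1)))) ∂μ :=
          integral_congr_ae (Filter.Eventually.of_forall hΦΨ)
      _ = ∫ z, (∫ ω, F2 (ω, z) ∂μ) ∂((volume.restrict (Set.Ioc (0:ℝ) 1)).prod
            (volume.restrict (Set.Ioc (0:ℝ) 1))) := integral_integral_swap intF2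
      _ = _ := by
          refine integral_congr_ae ?_
          filter_upwards [hprod_ae] with z hz using innerP z hz
  -- integrability of the polynomial pieces
  have int_sg : Integrable (fun s => s * g' s) (volume.restrict (Set.Ioc (0:ℝ) 1)) := by
    refine Integrable.mono' hg'int.norm ((measurable_id.mul hg'meas).aestronglyMeasurable) ?_
    filter_upwards [ae_restrict_mem measurableSet_Ioc] with s hs
    rw [norm_mul]
    have hsle : ‖s‖ ≤ 1 := by
      rw [Real.norm_eq_abs]
      exact abs_le.mpr ⟨by linarith [hs.1], hs.2⟩
    calc ‖s‖ * ‖g' s‖ ≤ 1 * ‖g' s‖ := mul_le_mul_of_nonneg_right hsle (norm_nonneg _)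
      _ = ‖g' s‖ := one_mul _
  have int_th : Integrable (fun t => t * h' t) (volume.restrict (Set.Ioc (0:ℝ) 1)) := by
    refine Integrable.mono' hh'int.norm ((measurable_id.mul hh'meas).aestronglyMeasurable) ?_
    filter_upwards [ae_restrict_mem measurableSet_Ioc] with t ht
    rw [norm_mul]
    have htle : ‖t‖ ≤ 1 := by
      rw [Real.norm_eq_abs]
      exact abs_le.mpr ⟨by linarith [ht.1], ht.2⟩
    calc ‖t‖ * ‖h' t‖ ≤ 1 * ‖h' t‖ := mul_le_mul_of_nonneg_right htle (norm_nonneg _)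
      _ = ‖h' t‖ := one_mul _
  have intST : Integrable (fun z : ℝ × ℝ => (z.1 * g' z.1) * (z.2 * h' z.2))
      ((volume.restrict (Set.Ioc (0:ℝ) 1)).prod (volume.restrict (Set.Ioc (0:ℝ) 1))) :=
    int_sg.mul_prod int_th
  have intdiff : Integrable (fun z : ℝ × ℝ => g' z.1 * h' z.2 * (C z.1 z.2 - z.1 * z.2))
      ((volume.restrict (Set.Ioc (0:ℝ) 1)).prod (volume.restrict (Set.Ioc (0:ℝ) 1))) := by
    refine (intC.sub intST).congr (Filter.Eventually.of_forall fun z => ?_)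
    simp only [Pi.sub_apply]
    ring
  -- identification of the right-hand side
  have hRHS : (∫ s in (0:ℝ)..1, ∫ t in (0:ℝ)..1, g s * h t * (C s t - s * t))
      = ∫ z : ℝ × ℝ, g' z.1 * h' z.2 * (C z.1 z.2 - z.1 * z.2)
        ∂((volume.restrict (Set.Ioc (0:ℝ) 1)).prod (volume.restrict (Set.Ioc (0:ℝ) 1))) := by
    rw [MeasureTheory.integral_prod _ intdiff, intervalIntegral.integral_of_le (zero_le_one)]
    refine integral_congr_ae ?_
    filter_upwards [hgg'] with s hs
    rw [intervalIntegral.integral_of_le (zero_le_one)]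
    refine integral_congr_ae ?_
    filter_upwards [hhh'] with t ht
    rw [hs, ht]
  have hsplit : (∫ z : ℝ × ℝ, g' z.1 * h' z.2 * (C z.1 z.2 - z.1 * z.2)
        ∂((volume.restrict (Set.Ioc (0:ℝ) 1)).prod (volume.restrict (Set.Ioc (0:ℝ) 1))))
      = (∫ z : ℝ × ℝ, g' z.1 * h' z.2 * C z.1 z.2
          ∂((volume.restrict (Set.Ioc (0:ℝ) 1)).prod (volume.restrict (Set.Ioc (0:ℝ) 1))))
        - (∫ s in Set.Ioc (0:ℝ) 1, s * g' s) * (∫ t in Set.Ioc (0:ℝ) 1, t * h' t) := by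
    have h1 : (∫ z : ℝ × ℝ, g' z.1 * h' z.2 * (C z.1 z.2 - z.1 * z.2)
          ∂((volume.restrict (Set.Ioc (0:ℝ) 1)).prod (volume.restrict (Set.Ioc (0:ℝ) 1))))
        = ∫ z : ℝ × ℝ, (g' z.1 * h' z.2 * C z.1 z.2 - (z.1 * g' z.1) * (z.2 * h' z.2))
          ∂((volume.restrict (Set.Ioc (0:ℝ) 1)).prod (volume.restrict (Set.Ioc (0:ℝ) 1))) :=
      integral_congr_ae (Filter.Eventually.of_forall fun z => by ring)
    rw [h1, integral_sub intC intST]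
    congr 1
    exact integral_prod_mul (fun s => s * g' s) (fun t => t * h' t)
  -- expectations of G(U), H(V) and their product
  have e1 : ∫ ω, G (U ω) ∂μ = G 1 - ∫ ω, Φ ω ∂μ := by
    have e : (fun ω => G (U ω)) = fun ω => G 1 - Φ ω := funext keyG
    rw [e, integral_sub (integrable_const _) hΦint, integral_const, probReal_univ,
      one_smul]
  have e2 : ∫ ω, H (V ω) ∂μ = H 1 - ∫ ω, Ψ ω ∂μ := by
    have e : (fun ω => H (V ω)) = fun ω => H 1 - Ψ ω := funext keyH
    rw [e, integral_sub (integrable_const _) hΨint, integral_const, probReal_univ,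
      one_smul]
  have e3 : ∫ ω, G (U ω) * H (V ω) ∂μ
      = G 1 * H 1 - G 1 * (∫ ω, Ψ ω ∂μ) - H 1 * (∫ ω, Φ ω ∂μ) + ∫ ω, Φ ω * Ψ ω ∂μ := by
    have e : (fun ω => G (U ω) * H (V ω))
        = fun ω => G 1 * H 1 - G 1 * Ψ ω - H 1 * Φ ω + Φ ω * Ψ ω := by
      funext ω
      rw [keyG, keyH]
      ring
    have iA : Integrable (fun ω => G 1 * H 1 - G 1 * Ψ ω - H 1 * Φ ω) μ :=
      ((integrable_const _).sub (hΨint.const_mul _)).sub (hΦint.const_mul _)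
    have iB : Integrable (fun ω => G 1 * H 1 - G 1 * Ψ ω) μ :=
      (integrable_const _).sub (hΨint.const_mul _)
    rw [e, integral_add iA hΦΨint, integral_sub iB (hΦint.const_mul _),
      integral_sub (integrable_const _) (hΨint.const_mul _),
      integral_const, integral_const_mul, integral_const_mul, probReal_univ,
      one_smul]
  rw [e3, e1, e2, hRHS, hsplit, hP, hA, hB]
  ring
end

section
/- The map S : C([0,1]) → ℝ defined by S(h) = sup_{p∈[0,1]} h(p) is Hadamard directionally differentiable at every φ ∈ C([0,1]), with directional derivative S′_φ(h) = sup_{p ∈ Ψ(φ)} h(p), where Ψ(φ) = argmax_{p∈[0,1]} φ(p); that is, for any sequences t_n ↓ 0 and h_n → h in the supremum norm on C([0,1]), (S(φ + t_n h_n) − S(φ))/t_n → sup_{p ∈ Ψ(φ)} h(p). -/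
open Filter

/-- Hadamard directional differentiability of the sup map `S(h) = sup_{p∈[0,1]} h(p)`,
with derivative `S′_φ(h) = sup_{p ∈ argmax φ} h(p)`. -/
theorem stmt6 (φ h : ℝ → ℝ)
    (hφ : ContinuousOn φ (Set.Icc 0 1)) (hh : ContinuousOn h (Set.Icc 0 1))
    (t : ℕ → ℝ) (hn : ℕ → ℝ → ℝ) (hcn : ∀ n, ContinuousOn (hn n) (Set.Icc 0 1))
    (htpos : ∀ n, 0 < t n) (ht : Tendsto t atTop (nhds 0))
    (hconv : Tendsto (fun n => sSup ((fun p => |hn n p - h p|) '' Set.Icc (0:ℝ) 1))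
      atTop (nhds 0)) :
    Tendsto
      (fun n => (sSup ((fun p => φ p + t n * hn n p) '' Set.Icc (0:ℝ) 1)
                  - sSup (φ '' Set.Icc (0:ℝ) 1)) / t n)
      atTop
      (nhds (sSup (h '' {p ∈ Set.Icc (0:ℝ) 1 | ∀ q ∈ Set.Icc (0:ℝ) 1, φ q ≤ φ p}))) := by
  have hIc : IsCompact (Set.Icc (0:ℝ) 1) := isCompact_Icc
  have hIne : (Set.Icc (0:ℝ) 1).Nonempty := Set.nonempty_Icc.2 zero_le_one
  set I : Set ℝ := Set.Icc 0 1 with hIdef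
  set M := sSup (φ '' I) with hMdef
  have hφbdd : BddAbove (φ '' I) := (hIc.image_of_continuousOn hφ).bddAbove
  have hφM : ∀ p ∈ I, φ p ≤ M := fun p hp => le_csSup hφbdd ⟨p, hp, rfl⟩
  obtain ⟨p₀, hp₀I, hp₀max⟩ := hIc.exists_isMaxOn hIne hφ
  set Ψ := {p ∈ I | ∀ q ∈ I, φ q ≤ φ p} with hΨdef
  have hp₀Ψ : p₀ ∈ Ψ := ⟨hp₀I, fun q hq => hp₀max hq⟩
  have hΨI : Ψ ⊆ I := fun p hp => hp.1
  have hΨM : ∀ p ∈ Ψ, φ p = M := by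
    intro p hp
    refine le_antisymm (hφM p hp.1) ?_
    exact csSup_le (hIne.image φ) (by rintro x ⟨q, hq, rfl⟩; exact hp.2 q hq)
  set D := sSup (h '' Ψ) with hDdef
  have hhbdd : BddAbove (h '' I) := (hIc.image_of_continuousOn hh).bddAbove
  have hhΨbdd : BddAbove (h '' Ψ) := hhbdd.mono (Set.image_mono hΨI)
  have hDle : ∀ p ∈ Ψ, h p ≤ D := fun p hp => le_csSup hhΨbdd ⟨p, hp, rfl⟩
  obtain ⟨B, hB⟩ := hIc.exists_bound_of_continuousOn hh
  simp only [Real.norm_eq_abs] at hB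
  -- the error terms
  set e : ℕ → ℝ := fun n => sSup ((fun p => |hn n p - h p|) '' I) with hedef
  have hebdd : ∀ n, BddAbove ((fun p => |hn n p - h p|) '' I) :=
    fun n => (hIc.image_of_continuousOn (((hcn n).sub hh).abs)).bddAbove
  have hele : ∀ n, ∀ p ∈ I, |hn n p - h p| ≤ e n :=
    fun n p hp => le_csSup (hebdd n) ⟨p, hp, rfl⟩
  have hepos : ∀ n, 0 ≤ e n := fun n => le_trans (abs_nonneg _) (hele n p₀ hp₀I)
  -- key upper bound
  have key : ∀ ε > (0:ℝ), ∃ τ > (0:ℝ), ∀ tt : ℝ, 0 < tt → tt ≤ τ →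
      ∀ p ∈ I, φ p + tt * h p ≤ M + tt * (D + ε) := by
    intro ε hε
    by_cases hK : ∃ p ∈ I, D + ε ≤ h p
    · set K := I ∩ h ⁻¹' (Set.Ici (D + ε)) with hKdef
      have hKcl : IsClosed K := hh.preimage_isClosed_of_isClosed isClosed_Icc isClosed_Ici
      have hKc : IsCompact K := hIc.of_isClosed_subset hKcl Set.inter_subset_left
      have hKne : K.Nonempty := by
        obtain ⟨p, hp, hp'⟩ := hK
        exact ⟨p, hp, hp'⟩
      obtain ⟨p₁, hp₁K, hp₁max⟩ := hKc.exists_isMaxOn hKne (hφ.mono Set.inter_subset_left)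
      have hp₁notΨ : p₁ ∉ Ψ := by
        intro hmem
        have := hDle p₁ hmem
        have h2 : D + ε ≤ h p₁ := hp₁K.2
        linarith
      have hclt : φ p₁ < M := by
        rcases not_and_or.1 hp₁notΨ with h1 | h1
        · exact absurd hp₁K.1 h1
        · push_neg at h1
          obtain ⟨q, hq, hq'⟩ := h1
          exact lt_of_lt_of_le hq' (hφM q hq)
      set c := M - φ p₁ with hcdef
      have hc : 0 < c := by simp [hcdef]; linarith
      set A := max (B - (D + ε)) 1 with hAdef
      have hA : (0:ℝ) < A := lt_of_lt_of_le one_pos (le_max_right _ _)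
      refine ⟨c / A, div_pos hc hA, ?_⟩
      intro tt htt0 httle p hp
      by_cases hp' : D + ε ≤ h p
      · have hpK : p ∈ K := ⟨hp, hp'⟩
        have h1 : φ p ≤ φ p₁ := hp₁max hpK
        have h2 : h p ≤ B := le_trans (le_abs_self _) (hB p hp)
        have h3 : tt * h p ≤ tt * B := mul_le_mul_of_nonneg_left h2 htt0.le
        have h4 : tt * (B - (D + ε)) ≤ tt * A :=
          mul_le_mul_of_nonneg_left (le_max_left _ _) htt0.le
        have h5 : tt * A ≤ (c / A) * A := mul_le_mul_of_nonneg_right httle hA.le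
        have h6 : (c / A) * A = c := div_mul_cancel₀ c hA.ne'
        nlinarith
      · push_neg at hp'
        have := hφM p hp
        nlinarith
    · push_neg at hK
      refine ⟨1, one_pos, ?_⟩
      intro tt htt0 _ p hp
      have h1 := hφM p hp
      have h2 := (hK p hp).le
      nlinarith
  -- main convergence argument
  rw [Metric.tendsto_atTop]
  intro ε hε
  obtain ⟨τ, hτ, hτkey⟩ := key (ε / 3) (by linarith)
  obtain ⟨N₁, hN₁⟩ := Metric.tendsto_atTop.1 ht τ hτ
  obtain ⟨N₂, hN₂⟩ := Metric.tendsto_atTop.1 hconv (ε / 3) (by linarith)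
  refine ⟨max N₁ N₂, ?_⟩
  intro n hn'
  have htτ : t n ≤ τ := by
    have := hN₁ n (le_trans (le_max_left _ _) hn')
    rw [Real.dist_eq, sub_zero, abs_of_pos (htpos n)] at this
    linarith
  have heε : e n < ε / 3 := by
    have := hN₂ n (le_trans (le_max_right _ _) hn')
    rw [Real.dist_eq, sub_zero, abs_of_nonneg (hepos n)] at this
    exact this
  set tn := t n with htndef
  have htn : 0 < tn := htpos n
  set S := sSup ((fun p => φ p + tn * hn n p) '' I) with hSdef
  have hSbdd : BddAbove ((fun p => φ p + tn * hn n p) '' I) :=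
    (hIc.image_of_continuousOn (hφ.add (continuousOn_const.mul (hcn n)))).bddAbove
  -- upper bound for S
  have hSupper : S ≤ M + tn * (D + ε / 3 + e n) := by
    refine csSup_le (hIne.image _) ?_
    rintro x ⟨p, hp, rfl⟩
    have h1 : hn n p - h p ≤ e n := le_trans (le_abs_self _) (hele n p hp)
    have h2 : φ p + tn * h p ≤ M + tn * (D + ε / 3) := hτkey tn htn htτ p hp
    nlinarith
  -- lower bound for S
  have hSlower : ∀ p ∈ Ψ, M + tn * (h p - e n) ≤ S := by
    intro p hp
    have h1 : φ p + tn * hn n p ≤ S := le_csSup hSbdd ⟨p, hΨI hp, rfl⟩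
    have h2 : h p - hn n p ≤ e n := by
      have h' := hele n p (hΨI hp)
      rw [abs_sub_comm] at h'
      exact le_trans (le_abs_self _) h'
    have h3 : φ p = M := hΨM p hp
    nlinarith
  have hq_upper : (S - M) / tn ≤ D + ε / 3 + e n := by
    rw [div_le_iff₀ htn]
    nlinarith
  have hq_lower : D - e n ≤ (S - M) / tn := by
    have hDup : D ≤ (S - M) / tn + e n := by
      refine csSup_le ⟨h p₀, p₀, hp₀Ψ, rfl⟩ ?_
      rintro x ⟨p, hp, rfl⟩
      have h1 : h p - e n ≤ (S - M) / tn :=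
        (le_div_iff₀ htn).2 (by nlinarith [hSlower p hp])
      linarith
    linarith
  rw [Real.dist_eq, abs_lt]
  constructor <;> linarith
end

section
/- The map I : C([0,1]) → ℝ defined by I(h) = ∫_0^1 max{h(p), 0} dp is Hadamard directionally differentiable at every φ ∈ C([0,1]), with directional derivative I′_φ(h) = ∫_{B₊(φ)} h(p) dp + ∫_{B₀(φ)} max{h(p), 0} dp, where B₀(φ) = {p : φ(p) = 0} and B₊(φ) = {p : φ(p) > 0}. -/
open Filter MeasureTheory

private lemma max_div_abs_le {a b t : ℝ} (htp : 0 < t) :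
    |(max (a + t * b) 0 - max a 0) / t| ≤ |b| := by
  rw [abs_div, abs_of_pos htp, div_le_iff₀ htp]
  calc |max (a + t * b) 0 - max a 0| ≤ |(a + t * b) - a| := abs_max_sub_max_le_abs _ _ _
    _ = |t| * |b| := by rw [add_sub_cancel_left, abs_mul]
    _ = |b| * t := by rw [abs_of_pos htp, mul_comm]

private lemma key (Φ H : ℝ → ℝ) (Hn : ℕ → ℝ → ℝ) (ε t : ℕ → ℝ)
    (hΦ : Continuous Φ) (hH : Continuous H) (hHn : ∀ n, Continuous (Hn n))
    (htpos : ∀ n, 0 < t n) (ht : Tendsto t atTop (nhds 0))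
    (hε : Tendsto ε atTop (nhds 0)) (hd : ∀ n p, |Hn n p - H p| ≤ ε n) :
    Tendsto (fun n => ((∫ p in (0:ℝ)..1, max (Φ p + t n * Hn n p) 0)
        - ∫ p in (0:ℝ)..1, max (Φ p) 0) / t n) atTop
      (nhds ((∫ p in {p ∈ Set.Icc (0:ℝ) 1 | 0 < Φ p}, H p)
        + ∫ p in {p ∈ Set.Icc (0:ℝ) 1 | Φ p = 0}, max (H p) 0)) := by
  obtain ⟨C, hC⟩ : ∃ C, ∀ n, ε n ≤ C := by
    obtain ⟨C, hC⟩ := hε.bddAbove_range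
    exact ⟨C, fun n => hC ⟨n, rfl⟩⟩
  have hHnb : ∀ n p, |Hn n p| ≤ |H p| + C := by
    intro n p
    calc |Hn n p| = |H p + (Hn n p - H p)| := by ring_nf
      _ ≤ |H p| + |Hn n p - H p| := abs_add_le _ _
      _ ≤ |H p| + C := add_le_add le_rfl ((hd n p).trans (hC n))
  have hHnlim : ∀ p, Tendsto (fun n => Hn n p) atTop (nhds (H p)) := by
    intro p
    have h0 : Tendsto (fun n => Hn n p - H p) atTop (nhds 0) :=
      squeeze_zero_norm (fun n => hd n p) hε
    have := h0.add (tendsto_const_nhds (x := H p))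
    simpa using this
  -- the difference quotient and its pointwise limit
  set G : ℕ → ℝ → ℝ := fun n p => (max (Φ p + t n * Hn n p) 0 - max (Φ p) 0) / t n with hGdef
  set g : ℝ → ℝ := fun p => if 0 < Φ p then H p else if Φ p = 0 then max (H p) 0 else 0
    with hgdef
  have hGc : ∀ n, Continuous (G n) := fun n =>
    (((hΦ.add (continuous_const.mul (hHn n))).max continuous_const).sub
      (hΦ.max continuous_const)).div_const _
  have hstepA : ∀ n, ((∫ p in (0:ℝ)..1, max (Φ p + t n * Hn n p) 0)
      - ∫ p in (0:ℝ)..1, max (Φ p) 0) / t n = ∫ p in Set.Ioc (0:ℝ) 1, G n p := by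
    intro n
    rw [← intervalIntegral.integral_sub
        (by exact ((hΦ.add (continuous_const.mul (hHn n))).max continuous_const).intervalIntegrable 0 1 :
          IntervalIntegrable (fun p => max (Φ p + t n * Hn n p) 0) volume 0 1)
        (by exact (hΦ.max continuous_const).intervalIntegrable 0 1 :
          IntervalIntegrable (fun p => max (Φ p) 0) volume 0 1),
      ← intervalIntegral.integral_div, intervalIntegral.integral_of_le zero_le_one]
  have hDCT : Tendsto (fun n => ∫ p in Set.Ioc (0:ℝ) 1, G n p) atTop
      (nhds (∫ p in Set.Ioc (0:ℝ) 1, g p)) := by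
    apply tendsto_integral_of_dominated_convergence (fun p => |H p| + C)
    · exact fun n => ((hGc n).aestronglyMeasurable).restrict
    · exact (hH.abs.add continuous_const).integrableOn_Ioc
    · intro n
      filter_upwards with p
      exact (max_div_abs_le (htpos n)).trans (hHnb n p)
    · filter_upwards with p
      have htH : Tendsto (fun n => t n * Hn n p) atTop (nhds 0) := by
        have := ht.mul (hHnlim p)
        simpa using this
      rcases lt_trichotomy 0 (Φ p) with hpos | heq | hneg
      · have hev : ∀ᶠ n in atTop, Hn n p = G n p := by
          filter_upwards [htH.eventually_const_lt (show -Φ p < 0 by linarith)] with n hn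
          have h0 : (0:ℝ) ≤ Φ p + t n * Hn n p := by linarith
          simp only [hGdef, max_eq_left h0, max_eq_left hpos.le, add_sub_cancel_left,
            mul_div_cancel_left₀ _ (htpos n).ne']
        have : g p = H p := by simp [hgdef, hpos]
        rw [this]
        exact (hHnlim p).congr' hev
      · have hev : ∀ n, G n p = max (Hn n p) 0 := by
          intro n
          have : max (t n * Hn n p) 0 = t n * max (Hn n p) 0 := by
            rw [mul_max_of_nonneg _ _ (htpos n).le, mul_zero]
          simp only [hGdef, ← heq, zero_add, this, max_self, sub_zero,
            mul_div_cancel_left₀ _ (htpos n).ne']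
        have hg : g p = max (H p) 0 := by simp [hgdef, ← heq]
        rw [hg]
        exact Tendsto.congr (fun n => (hev n).symm) ((hHnlim p).max tendsto_const_nhds)
      · have hev : ∀ᶠ n in atTop, (0:ℝ) = G n p := by
          filter_upwards [htH.eventually_lt_const (show (0:ℝ) < -Φ p by linarith)] with n hn
          have h0 : Φ p + t n * Hn n p ≤ 0 := by linarith
          simp [hGdef, max_eq_right h0, max_eq_right hneg.le]
        have hg : g p = 0 := by simp [hgdef, hneg.not_gt, hneg.ne]
        rw [hg]
        exact tendsto_const_nhds.congr' hev
  have hm1 : MeasurableSet {p : ℝ | 0 < Φ p} := measurableSet_lt measurable_const hΦ.measurable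
  have hm2 : MeasurableSet {p : ℝ | Φ p = 0} :=
    hΦ.measurable (measurableSet_singleton (0:ℝ))
  have hsetae : ∀ S : Set ℝ, (Set.Ioc (0:ℝ) 1 ∩ S : Set ℝ) =ᵐ[volume] ((Set.Icc (0:ℝ) 1 ∩ S : Set ℝ)) :=
    fun S => MeasureTheory.ae_eq_set_inter Ioc_ae_eq_Icc (Filter.EventuallyEq.rfl)
  have hsplit : (∫ p in Set.Ioc (0:ℝ) 1, g p)
      = (∫ p in {p ∈ Set.Icc (0:ℝ) 1 | 0 < Φ p}, H p)
        + ∫ p in {p ∈ Set.Icc (0:ℝ) 1 | Φ p = 0}, max (H p) 0 := by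
    have hgind : ∀ p, g p = Set.indicator {p : ℝ | 0 < Φ p} H p
        + Set.indicator {p : ℝ | Φ p = 0} (fun q => max (H q) 0) p := by
      intro p
      by_cases h1 : 0 < Φ p
      · simp [hgdef, h1, Set.indicator, h1.ne']
      · by_cases h2 : Φ p = 0 <;> simp [hgdef, h1, h2, Set.indicator]
    rw [MeasureTheory.integral_congr_ae (Filter.Eventually.of_forall hgind)]
    rw [MeasureTheory.integral_add
        ((hH.integrableOn_Ioc).indicator hm1)
        (((hH.max continuous_const).integrableOn_Ioc).indicator hm2)]
    rw [MeasureTheory.setIntegral_indicator hm1, MeasureTheory.setIntegral_indicator hm2]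
    rw [MeasureTheory.setIntegral_congr_set (hsetae {p : ℝ | 0 < Φ p}),
      MeasureTheory.setIntegral_congr_set (hsetae {p : ℝ | Φ p = 0})]
    rfl
  rw [← hsplit]
  exact hDCT.congr (fun n => (hstepA n).symm)

/-- Hadamard directional differentiability of `I(h) = ∫₀¹ max{h(p),0} dp`,
with derivative `I′_φ(h) = ∫_{B₊(φ)} h + ∫_{B₀(φ)} max{h,0}`. -/
theorem stmt7 (φ h : ℝ → ℝ)
    (hφ : ContinuousOn φ (Set.Icc 0 1)) (hh : ContinuousOn h (Set.Icc 0 1))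
    (t : ℕ → ℝ) (hn : ℕ → ℝ → ℝ) (hcn : ∀ n, ContinuousOn (hn n) (Set.Icc 0 1))
    (htpos : ∀ n, 0 < t n) (ht : Tendsto t atTop (nhds 0))
    (hconv : Tendsto (fun n => sSup ((fun p => |hn n p - h p|) '' Set.Icc (0:ℝ) 1))
      atTop (nhds 0)) :
    Tendsto
      (fun n => ((∫ p in (0:ℝ)..1, max (φ p + t n * hn n p) 0)
                  - ∫ p in (0:ℝ)..1, max (φ p) 0) / t n)
      atTop
      (nhds ((∫ p in {p ∈ Set.Icc (0:ℝ) 1 | 0 < φ p}, h p)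
              + ∫ p in {p ∈ Set.Icc (0:ℝ) 1 | φ p = 0}, max (h p) 0)) := by
  set q : ℝ → ℝ := fun p => min (max p 0) 1 with hq
  have hqc : Continuous q := (continuous_id.max continuous_const).min continuous_const
  have hqmem : ∀ p, q p ∈ Set.Icc (0:ℝ) 1 :=
    fun p => ⟨le_min (le_max_right p 0) zero_le_one, min_le_right _ _⟩
  have hqid : ∀ p ∈ Set.Icc (0:ℝ) 1, q p = p := fun p hp => by
    simp [hq, max_eq_left hp.1, min_eq_left hp.2]
  set ε : ℕ → ℝ := fun n => sSup ((fun p => |hn n p - h p|) '' Set.Icc (0:ℝ) 1) with hε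
  have hd : ∀ n p, |(hn n ∘ q) p - (h ∘ q) p| ≤ ε n := by
    intro n p
    have hbdd : BddAbove ((fun p => |hn n p - h p|) '' Set.Icc (0:ℝ) 1) :=
      isCompact_Icc.bddAbove_image ((hcn n).sub hh).abs
    exact le_csSup hbdd ⟨q p, hqmem p, rfl⟩
  have hkey := key (φ ∘ q) (h ∘ q) (fun n => hn n ∘ q) ε t
    (hφ.comp_continuous hqc hqmem) (hh.comp_continuous hqc hqmem)
    (fun n => (hcn n).comp_continuous hqc hqmem) htpos ht hconv hd
  -- identify interval integrals
  have e1 : ∀ n, (∫ p in (0:ℝ)..1, max ((φ ∘ q) p + t n * (hn n ∘ q) p) 0)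
      = ∫ p in (0:ℝ)..1, max (φ p + t n * hn n p) 0 := by
    intro n
    apply intervalIntegral.integral_congr
    intro p hp
    rw [Set.uIcc_of_le zero_le_one] at hp
    simp [Function.comp, hqid p hp]
  have e2 : (∫ p in (0:ℝ)..1, max ((φ ∘ q) p) 0) = ∫ p in (0:ℝ)..1, max (φ p) 0 := by
    apply intervalIntegral.integral_congr
    intro p hp
    rw [Set.uIcc_of_le zero_le_one] at hp
    simp [Function.comp, hqid p hp]
  -- identify the sets and set integrals
  have hset1 : {p ∈ Set.Icc (0:ℝ) 1 | 0 < (φ ∘ q) p} = {p ∈ Set.Icc (0:ℝ) 1 | 0 < φ p} := by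
    ext p
    exact and_congr_right fun hp => by rw [Function.comp_apply, hqid p hp]
  have hset2 : {p ∈ Set.Icc (0:ℝ) 1 | (φ ∘ q) p = 0} = {p ∈ Set.Icc (0:ℝ) 1 | φ p = 0} := by
    ext p
    exact and_congr_right fun hp => by rw [Function.comp_apply, hqid p hp]
  have hm1 : MeasurableSet {p ∈ Set.Icc (0:ℝ) 1 | 0 < (φ ∘ q) p} :=
    measurableSet_Icc.inter
      (measurableSet_lt measurable_const (hφ.comp_continuous hqc hqmem).measurable)
  have hm2 : MeasurableSet {p ∈ Set.Icc (0:ℝ) 1 | (φ ∘ q) p = 0} :=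
    measurableSet_Icc.inter
      ((hφ.comp_continuous hqc hqmem).measurable (measurableSet_singleton (0:ℝ)))
  have e3 : (∫ p in {p ∈ Set.Icc (0:ℝ) 1 | 0 < (φ ∘ q) p}, (h ∘ q) p)
      = ∫ p in {p ∈ Set.Icc (0:ℝ) 1 | 0 < φ p}, h p := by
    calc (∫ p in {p ∈ Set.Icc (0:ℝ) 1 | 0 < (φ ∘ q) p}, (h ∘ q) p)
        = ∫ p in {p ∈ Set.Icc (0:ℝ) 1 | 0 < (φ ∘ q) p}, h p :=
          MeasureTheory.setIntegral_congr_fun hm1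
            (fun p hp => congrArg h (hqid p hp.1))
      _ = ∫ p in {p ∈ Set.Icc (0:ℝ) 1 | 0 < φ p}, h p := by rw [hset1]
  have e4 : (∫ p in {p ∈ Set.Icc (0:ℝ) 1 | (φ ∘ q) p = 0}, max ((h ∘ q) p) 0)
      = ∫ p in {p ∈ Set.Icc (0:ℝ) 1 | φ p = 0}, max (h p) 0 := by
    calc (∫ p in {p ∈ Set.Icc (0:ℝ) 1 | (φ ∘ q) p = 0}, max ((h ∘ q) p) 0)
        = ∫ p in {p ∈ Set.Icc (0:ℝ) 1 | (φ ∘ q) p = 0}, max (h p) 0 :=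
          MeasureTheory.setIntegral_congr_fun hm2
            (fun p hp => by rw [Function.comp_apply, hqid p hp.1])
      _ = ∫ p in {p ∈ Set.Icc (0:ℝ) 1 | φ p = 0}, max (h p) 0 := by rw [hset2]
  rw [← e3, ← e4]
  exact hkey.congr fun n => by rw [e1 n, e2]
end
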